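/- arXiv:1610.05470 — 5 statements merged into one kernel-verified Lean document; each statement's English description precedes it below -/
import Mathlib

section
/- Let g : ℝⁿ → ℝ ∪ {∞} and h : ℝⁿ → ℝ ∪ {∞} be proper convex functions. If x̄ is an optimal solution of the DC program min_{x ∈ dom g} [g(x) − h(x)], then every y ∈ ∂h(x̄) is an optimal solution of the Toland–Singer dual problem min_{y ∈ dom h*} [h*(y) − g*(y)]. -/
open Matrix Set

def ConvexERealFn {n : ℕ} (f : (Fin n → ℝ) → EReal) : Prop :=
  ∀ x y : Fin n → ℝ, ∀ a b : ℝ, 0 ≤ a → 0 ≤ b → a + b = 1 →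
    f (a • x + b • y) ≤ (a : EReal) * f x + (b : EReal) * f y

noncomputable def conjFn {n : ℕ} (f : (Fin n → ℝ) → EReal) (y : Fin n → ℝ) : EReal :=
  ⨆ x : Fin n → ℝ, (((y ⬝ᵥ x : ℝ) : EReal) - f x)

/-- Subdifferential of an extended-real-valued function, empty outside the domain. -/
def subdiffFn {n : ℕ} (f : (Fin n → ℝ) → EReal) (xb : Fin n → ℝ) : Set (Fin n → ℝ) :=
  {y | f xb ≠ ⊤ ∧ ∀ x, f xb + ((y ⬝ᵥ (x - xb) : ℝ) : EReal) ≤ f x}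

/-! Let `α = g x̄ - h x̄`. Optimality says `α ≤ g - h` on `dom g`, hence
`⟨z, x⟩ - g x ≤ ⟨z, x⟩ - h x - α ≤ h* z - α` for every `x`, i.e. `α ≤ h* - g*` on `dom h*`.
On the other hand `y ∈ ∂h(x̄)` is exactly the Fenchel–Young equality `h* y = ⟨y, x̄⟩ - h x̄`,
and `g* y ≥ ⟨y, x̄⟩ - g x̄`, so `h* y - g* y ≤ α`. -/

section Conjugate

variable {n : ℕ} {f g h : (Fin n → ℝ) → EReal}

lemma coe_dotProduct_sub_le_conjFn (f : (Fin n → ℝ) → EReal) (z x : Fin n → ℝ) :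
    ((z ⬝ᵥ x : ℝ) : EReal) - f x ≤ conjFn f z :=
  le_iSup (fun x => ((z ⬝ᵥ x : ℝ) : EReal) - f x) x

lemma conjFn_ne_bot {x : Fin n → ℝ} (hx : f x ≠ ⊤) (z : Fin n → ℝ) : conjFn f z ≠ ⊥ := by
  refine ne_bot_of_le_ne_bot ?_ (coe_dotProduct_sub_le_conjFn f z x)
  generalize f x = u at hx
  induction u using EReal.rec <;> simp_all [← EReal.coe_sub]

lemma conjFn_eq_of_mem_subdiffFn {xb y : Fin n → ℝ} (hbot : f xb ≠ ⊥)
    (hy : y ∈ subdiffFn f xb) : conjFn f y = ((y ⬝ᵥ xb : ℝ) : EReal) - f xb := by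
  obtain ⟨htop, hsub⟩ := hy
  refine le_antisymm (iSup_le fun x => ?_) (coe_dotProduct_sub_le_conjFn f y xb)
  lift f xb to ℝ using ⟨htop, hbot⟩ with a
  calc ((y ⬝ᵥ x : ℝ) : EReal) - f x
        ≤ ((y ⬝ᵥ x : ℝ) : EReal) - (a + ((y ⬝ᵥ (x - xb) : ℝ) : EReal)) :=
          EReal.sub_le_sub le_rfl (hsub x)
      _ = ((y ⬝ᵥ xb : ℝ) : EReal) - a := by
          norm_cast; rw [dotProduct_sub]; ring

lemma conjFn_le_conjFn_sub_of_le_sub {α : ℝ} (hα : ∀ x, g x ≠ ⊤ → (α : EReal) ≤ g x - h x)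
    (z : Fin n → ℝ) : conjFn g z ≤ conjFn h z - α := by
  refine iSup_le fun x => ?_
  by_cases hgx : g x = ⊤
  · simp [hgx]
  have hz := coe_dotProduct_sub_le_conjFn h z x
  have hαx := hα x hgx
  generalize g x = u at hgx hαx ⊢
  generalize h x = v at hz hαx ⊢
  induction u using EReal.rec with
  | bot => simp at hαx
  | top => exact absurd rfl hgx
  | coe b =>
    induction v using EReal.rec with
    | bot => simp_all
    | top => simp at hαx
    | coe d =>
      calc ((z ⬝ᵥ x : ℝ) : EReal) - b ≤ ((z ⬝ᵥ x : ℝ) : EReal) - d - α := by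
            norm_cast at hαx ⊢; linarith
        _ ≤ conjFn h z - α := EReal.sub_le_sub hz le_rfl

lemma le_conjFn_sub_conjFn_of_le_sub {α : ℝ} (hα : ∀ x, g x ≠ ⊤ → (α : EReal) ≤ g x - h x)
    {z : Fin n → ℝ} (hztop : conjFn h z ≠ ⊤) (hzbot : conjFn h z ≠ ⊥) :
    (α : EReal) ≤ conjFn h z - conjFn g z := by
  have hg := conjFn_le_conjFn_sub_of_le_sub hα z
  lift conjFn h z to ℝ using ⟨hztop, hzbot⟩ with c
  generalize conjFn g z = u at hg ⊢
  induction u using EReal.rec with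
  | bot => simp
  | top => simp [← EReal.coe_sub] at hg
  | coe b => norm_cast at hg ⊢; linarith

end Conjugate

theorem stmt6_general {n : ℕ} (g h : (Fin n → ℝ) → EReal)
    (hhbot : ∀ x, h x ≠ ⊥)
    (xb : Fin n → ℝ)
    (hopt : g xb ≠ ⊤ ∧ ∀ x, g x ≠ ⊤ → g xb - h xb ≤ g x - h x)
    (y : Fin n → ℝ) (hy : y ∈ subdiffFn h xb) :
    conjFn h y ≠ ⊤ ∧
      ∀ z, conjFn h z ≠ ⊤ → conjFn h y - conjFn g y ≤ conjFn h z - conjFn g z := by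
  have hy_eq := conjFn_eq_of_mem_subdiffFn (hhbot xb) hy
  have hgy := coe_dotProduct_sub_le_conjFn g y xb
  have hconj_bot : ∀ z, conjFn h z ≠ ⊥ := conjFn_ne_bot hy.1
  lift h xb to ℝ using ⟨hy.1, hhbot xb⟩ with a
  refine ⟨by simp [hy_eq, ← EReal.coe_sub], fun z hz => ?_⟩
  obtain hgxb | hgxb := eq_or_ne (g xb) ⊥
  · have : conjFn g y = ⊤ := by simpa [hgxb] using hgy
    simp [this]
  lift g xb to ℝ using ⟨hopt.1, hgxb⟩ with c
  calc conjFn h y - conjFn g y ≤ ((y ⬝ᵥ xb : ℝ) : EReal) - a - (((y ⬝ᵥ xb : ℝ) : EReal) - c) :=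
        EReal.sub_le_sub hy_eq.le hgy
    _ = ((c - a : ℝ) : EReal) := by norm_cast; ring
    _ ≤ conjFn h z - conjFn g z :=
        le_conjFn_sub_conjFn_of_le_sub (by simpa [EReal.coe_sub] using hopt.2) hz (hconj_bot z)

/-- Toland–Singer duality (i): if `x̄` solves the DC program `min_{x ∈ dom g} [g − h]`,
then every `y ∈ ∂h(x̄)` solves the dual `min_{y ∈ dom h*} [h* − g*]`. -/
theorem stmt6 {n : ℕ} (g h : (Fin n → ℝ) → EReal)
    (hg : ConvexERealFn g) (hh : ConvexERealFn h)
    (hgbot : ∀ x, g x ≠ ⊥) (hhbot : ∀ x, h x ≠ ⊥)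
    (hgproper : ∃ x, g x ≠ ⊤) (hhproper : ∃ x, h x ≠ ⊤)
    (xb : Fin n → ℝ)
    (hopt : g xb ≠ ⊤ ∧ ∀ x, g x ≠ ⊤ → g xb - h xb ≤ g x - h x)
    (y : Fin n → ℝ) (hy : y ∈ subdiffFn h xb) :
    conjFn h y ≠ ⊤ ∧
      ∀ z, conjFn h z ≠ ⊤ → conjFn h y - conjFn g y ≤ conjFn h z - conjFn g z :=
  stmt6_general g h hhbot xb hopt y hy
end

section
/- Define f : ℝ → ℝ ∪ {∞} by f(x) = ∞ for x < 0, f(0) = 1, f(x) = 0 for x > 0. Set g = f and h = cl f (the lower semicontinuous hull of f, which equals 0 on [0,∞) and ∞ on (−∞,0)). Then y = 0 is an optimal solution of min_{y ∈ dom h*} [h*(y) − g*(y)] and 0 ∈ ∂g*(0), yet x = 0 is not an optimal solution of min_{x ∈ dom g} [g(x) − h(x)]. -/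
open Set

/-- The function `f(x) = ∞` for `x < 0`, `f(0) = 1`, `f(x) = 0` for `x > 0`. -/
noncomputable def fEx : ℝ → EReal := fun x => if x < 0 then ⊤ else if x = 0 then 1 else 0

/-- The lower semicontinuous hull of `fEx`: `0` on `[0,∞)`, `∞` on `(−∞,0)`. -/
noncomputable def clfEx : ℝ → EReal := fun x => if x < 0 then ⊤ else 0

/-- One-dimensional Fenchel conjugate. -/
noncomputable def conj1 (f : ℝ → EReal) (y : ℝ) : EReal :=
  ⨆ x : ℝ, (((y * x : ℝ) : EReal) - f x)

/-- One-dimensional subdifferential. -/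
def subdiff1 (f : ℝ → EReal) (xb : ℝ) : Set ℝ :=
  {y | f xb ≠ ⊤ ∧ ∀ x, f xb + ((y * (x - xb) : ℝ) : EReal) ≤ f x}

/-!
The conjugate only sees the lower semicontinuous hull: `fEx` and `clfEx` differ only at `0`,
where the term `y * 0 - clfEx 0 = 0` of `clfEx*` is the limit of the terms `y * x - fEx x = y * x`
as `x → 0⁺`. Hence `g* = h*`, the dual objective `h* - g*` vanishes on `dom h*`, and
`g* ≥ 0 = g*(0)` puts `0` in `∂g*(0)`. The primal objective `g - h` is `1` at `0` but `0` at `1`.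
-/

open Filter Topology

lemma conj1_anti {f g : ℝ → EReal} (hfg : f ≤ g) : conj1 g ≤ conj1 f :=
  fun _ => iSup_mono fun x => EReal.sub_le_sub le_rfl (hfg x)

lemma zero_le_conj1_of_eventually_nonpos {f : ℝ → EReal} (hf : ∀ᶠ x in 𝓝[>] (0 : ℝ), f x ≤ 0)
    (y : ℝ) : 0 ≤ conj1 f y := by
  have hlim : Tendsto (fun x : ℝ => ((y * x : ℝ) : EReal)) (𝓝[>] 0) (𝓝 0) := by
    have : Tendsto (fun x : ℝ => y * x) (𝓝[>] 0) (𝓝 0) := by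
      simpa using tendsto_nhdsWithin_of_tendsto_nhds ((continuous_const_mul y).tendsto 0)
    simpa using EReal.tendsto_coe.2 this
  refine le_of_tendsto hlim (hf.mono fun x hx => ?_)
  calc ((y * x : ℝ) : EReal) ≤ ((y * x : ℝ) : EReal) - f x := by
        simpa using EReal.sub_le_sub (le_refl ((y * x : ℝ) : EReal)) hx
    _ ≤ conj1 f y := le_iSup (fun x => ((y * x : ℝ) : EReal) - f x) x

lemma clfEx_le_fEx : clfEx ≤ fEx := by
  intro x
  unfold fEx clfEx
  split_ifs <;> norm_num

lemma clfEx_nonneg (x : ℝ) : 0 ≤ clfEx x := by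
  unfold clfEx
  split_ifs <;> simp

lemma zero_le_conj1_fEx (y : ℝ) : 0 ≤ conj1 fEx y :=
  zero_le_conj1_of_eventually_nonpos (eventually_nhdsWithin_of_forall fun x (hx : 0 < x) => by
    simp [fEx, not_lt.2 hx.le, hx.ne']) y

lemma conj1_fEx_eq_conj1_clfEx : conj1 fEx = conj1 clfEx := by
  refine le_antisymm (conj1_anti clfEx_le_fEx) fun y => iSup_le fun x => ?_
  rcases eq_or_ne x 0 with rfl | hx
  · simpa [clfEx] using zero_le_conj1_fEx y
  · have hfx : clfEx x = fEx x := by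
      unfold fEx clfEx
      split_ifs <;> simp_all
    rw [hfx]
    exact le_iSup (fun x => ((y * x : ℝ) : EReal) - fEx x) x

lemma conj1_clfEx_zero : conj1 clfEx 0 = 0 := by
  refine le_antisymm (iSup_le fun x => ?_) ?_
  · simpa using EReal.sub_le_sub (le_refl ((0 : ℝ) : EReal)) (clfEx_nonneg x)
  · exact le_iSup_of_le (0 : ℝ) (by simp [clfEx])

/-- With `g = fEx` (not closed) and `h = clfEx`: `y = 0` solves the dual
`min_{y ∈ dom h*}[h* − g*]` and `0 ∈ ∂g*(0)`, yet `x = 0` does not solve the primal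
`min_{x ∈ dom g}[g − h]`. So closedness of `g` cannot be dropped. -/
theorem stmt8 :
    (conj1 clfEx 0 ≠ ⊤ ∧ ∀ y : ℝ, conj1 clfEx y ≠ ⊤ →
      conj1 clfEx 0 - conj1 fEx 0 ≤ conj1 clfEx y - conj1 fEx y) ∧
    (0 : ℝ) ∈ subdiff1 (conj1 fEx) 0 ∧
    ¬ (∀ x : ℝ, fEx x ≠ ⊤ → fEx 0 - clfEx 0 ≤ fEx x - clfEx x) := by
  have hzero : conj1 fEx 0 = 0 := by rw [conj1_fEx_eq_conj1_clfEx, conj1_clfEx_zero]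
  refine ⟨⟨by simp [conj1_clfEx_zero], fun y hy => ?_⟩, ⟨by simp [hzero], fun x => ?_⟩, fun h => ?_⟩
  · have hbot : conj1 clfEx y ≠ ⊥ :=
      ne_bot_of_le_ne_bot EReal.zero_ne_bot (conj1_fEx_eq_conj1_clfEx ▸ zero_le_conj1_fEx y)
    rw [conj1_fEx_eq_conj1_clfEx, conj1_clfEx_zero, EReal.sub_self hy hbot]
    simp
  · simpa [hzero] using zero_le_conj1_fEx x
  · have h1 := h 1 (by norm_num [fEx])
    norm_num [fEx, clfEx] at h1
    exact zero_lt_one.not_ge h1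
end

section
/- Define f : ℝ → ℝ ∪ {∞} by f(x) = ∞ for x < 0, f(0) = 1, f(x) = 0 for x > 0. Set g = cl f and h = f. Then y = 0 is an optimal solution of min_{y ∈ dom h*} [h*(y) − g*(y)] and 1 ∈ ∂g*(0), but x = 1 is not an optimal solution of min_{x ∈ dom g} [g(x) − h(x)]. -/
open Set

lemma conj1_clfEx_of_nonpos {y : ℝ} (hy : y ≤ 0) : conj1 clfEx y = 0 := by
  unfold conj1 clfEx
  apply le_antisymm
  · apply iSup_le
    intro x
    by_cases hx : x < 0
    · simp [hx, EReal.sub_top]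
    · simp only [hx, if_false, sub_zero]
      exact_mod_cast mul_nonpos_of_nonpos_of_nonneg hy (not_lt.1 hx)
  · have h0 := le_iSup (fun x : ℝ => (((y * x : ℝ) : EReal) - if x < 0 then (⊤ : EReal) else 0)) 0
    simpa using h0

lemma conj1_fEx_zero : conj1 fEx 0 = 0 := by
  unfold conj1 fEx
  apply le_antisymm
  · apply iSup_le
    intro x
    by_cases hx : x < 0
    · simp [hx, EReal.sub_top]
    · by_cases hx0 : x = 0
      · subst hx0
        norm_num
      · simp only [hx, if_false, hx0, sub_zero, zero_mul]
        exact le_refl _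
  · refine le_trans ?_ (le_iSup (fun x : ℝ =>
      (((0 * x : ℝ) : EReal) - if x < 0 then (⊤:EReal) else if x = 0 then 1 else 0)) 1)
    norm_num

lemma conj1_fEx_nonneg_of_nonpos {y : ℝ} (hy : y ≤ 0) : 0 ≤ conj1 fEx y := by
  unfold conj1
  rw [le_iSup_iff]
  intro b hb
  by_contra hlt
  push_neg at hlt
  induction b using EReal.rec with
  | bot =>
      have := hb 1
      simp only [fEx] at this
      norm_num at this
  | coe r =>
      have hr : r < 0 := by exact_mod_cast hlt
      rcases eq_or_lt_of_le hy with h0 | hneg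
      · subst h0
        have hf1 : fEx 1 = 0 := by norm_num [fEx]
        have := hb 1
        rw [hf1, sub_zero] at this
        have : (0 : ℝ) * 1 ≤ r := EReal.coe_le_coe_iff.1 this
        linarith
      · have hyne : y ≠ 0 := ne_of_lt hneg
        set x : ℝ := r / (2 * y) with hx
        have hxpos : 0 < x := div_pos_of_neg_of_neg hr (by linarith)
        have hfx : fEx x = 0 := by simp [fEx, not_lt.2 hxpos.le, hxpos.ne']
        have hxval : y * x = r / 2 := by
          rw [hx]
          field_simp
        have := hb x
        rw [hfx, sub_zero, hxval] at this
        have : r / 2 ≤ r := EReal.coe_le_coe_iff.1 this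
        linarith
  | top => exact absurd hlt (by simp)

lemma conj1_fEx_of_pos {y : ℝ} (hy : 0 < y) : conj1 fEx y = ⊤ := by
  unfold conj1
  rw [eq_top_iff, le_iSup_iff]
  intro b hb
  induction b using EReal.rec with
  | bot =>
      have := hb 1
      simp only [fEx] at this
      norm_num at this
  | coe r =>
      obtain ⟨n, hn⟩ := exists_nat_gt (r / y)
      set x : ℝ := (n : ℝ) + 1 with hxdef
      have hxpos : 0 < x := by positivity
      have hgt : r < y * x := by
        have h1 : r < y * n := by
          rw [div_lt_iff₀ hy] at hn
          linarith [hn]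
        nlinarith
      have := hb x
      rw [show fEx x = 0 by simp [fEx, not_lt.2 hxpos.le, hxpos.ne'], sub_zero] at this
      have := EReal.coe_le_coe_iff.1 this
      linarith
  | top => exact le_refl _

/-- With `g = clfEx` (closed) and `h = fEx` (not closed): `y = 0` solves the dual
`min_{y ∈ dom h*}[h* − g*]` and `1 ∈ ∂g*(0)`, yet `x = 1` does not solve the primal
`min_{x ∈ dom g}[g − h]`. So closedness of `h` cannot be dropped. -/
theorem stmt9 :
    (conj1 fEx 0 ≠ ⊤ ∧ ∀ y : ℝ, conj1 fEx y ≠ ⊤ →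
      conj1 fEx 0 - conj1 clfEx 0 ≤ conj1 fEx y - conj1 clfEx y) ∧
    (1 : ℝ) ∈ subdiff1 (conj1 clfEx) 0 ∧
    ¬ (∀ x : ℝ, clfEx x ≠ ⊤ → clfEx 1 - fEx 1 ≤ clfEx x - fEx x) := by
  refine ⟨⟨by rw [conj1_fEx_zero]; exact (by norm_num : (0:EReal) ≠ ⊤), ?_⟩, ⟨?_, ?_⟩, ?_⟩
  · intro y hy
    have hy0 : y ≤ 0 := by
      by_contra h
      exact hy (conj1_fEx_of_pos (not_le.1 h))
    rw [conj1_fEx_zero, conj1_clfEx_of_nonpos le_rfl, conj1_clfEx_of_nonpos hy0,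
      sub_zero, sub_zero]
    exact conj1_fEx_nonneg_of_nonpos hy0
  · rw [conj1_clfEx_of_nonpos le_rfl]; exact (by norm_num : (0:EReal) ≠ ⊤)
  · intro x
    rw [conj1_clfEx_of_nonpos le_rfl, zero_add]
    have h1 := le_iSup (fun t : ℝ => (((x * t : ℝ) : EReal) - clfEx t)) 1
    simp only [clfEx] at h1
    norm_num at h1
    unfold conj1
    calc ((1 * (x - 0) : ℝ) : EReal) = ((x : ℝ) : EReal) := by norm_num
      _ ≤ _ := by
          refine le_trans ?_ h1
          exact le_refl _
  · push_neg
    refine ⟨0, by simp [clfEx], ?_⟩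
    have h1 : clfEx 1 - fEx 1 = 0 := by norm_num [clfEx, fEx]
    have h0 : clfEx 0 - fEx 0 = ((0:ℝ):EReal) - ((1:ℝ):EReal) := by norm_num [clfEx, fEx]
    rw [h1, h0, ← EReal.coe_sub]
    exact_mod_cast (by norm_num : ((0:ℝ) - 1) < 0)
end

section
/- Let h : ℝⁿ → ℝ ∪ {∞} be a polyhedral convex function with dim(epi h) = n + 1 (i.e., epi h has nonempty interior in ℝ^{n+1}). Then the epigraph of the conjugate h* has at least one vertex (extreme point). -/
open Matrix Set

def epiFn {n : ℕ} (f : (Fin n → ℝ) → EReal) : Set ((Fin n → ℝ) × ℝ) :=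
  {p | f p.1 ≤ (p.2 : EReal)}

/-- A polyhedral convex function: one whose epigraph is the solution set of finitely
many linear inequalities. -/
def IsPolyhedralFn {n : ℕ} (f : (Fin n → ℝ) → EReal) : Prop :=
  ∃ (m : ℕ) (B : Matrix (Fin m) (Fin n) ℝ) (b c : Fin m → ℝ),
    epiFn f = {p | ∀ i, c i ≤ (B *ᵥ p.1) i + b i * p.2}

section aux
open MeasureTheory

lemma ereal_eq_bot (z : EReal) (h : ∀ r : ℝ, z ≤ (r : EReal)) : z = ⊥ := by
  induction z using EReal.rec with
  | bot => rfl
  | coe r => exact absurd (h (r - 1)) (by exact_mod_cast not_le.2 (by linarith : r - 1 < r))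
  | top => exact absurd (h 0) (by simp)

lemma ereal_exists_le (z : EReal) (h : z ≠ ⊤) : ∃ r : ℝ, z ≤ (r : EReal) := by
  induction z using EReal.rec with
  | bot => exact ⟨0, bot_le⟩
  | coe r => exact ⟨r, le_rfl⟩
  | top => exact absurd rfl h

lemma ereal_exists_eq (z : EReal) (hb : z ≠ ⊥) {r : ℝ} (h : z ≤ (r : EReal)) :
    ∃ s : ℝ, z = (s : EReal) ∧ s ≤ r := by
  induction z using EReal.rec with
  | bot => exact absurd rfl hb
  | coe s => exact ⟨s, rfl, by exact_mod_cast h⟩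
  | top => exact absurd h (by simp)

lemma hyper_null {n : ℕ} (v : Fin n → ℝ) (hv : v ≠ 0) (t : ℝ) :
    volume {x : Fin n → ℝ | v ⬝ᵥ x = t} = 0 := by
  obtain ⟨j, hj⟩ : ∃ j, v j ≠ 0 := by
    by_contra hc; push_neg at hc; exact hv (funext hc)
  set z : Fin n → ℝ := (t / v j) • (Pi.single j 1 : Fin n → ℝ) with hz
  have hzv : v ⬝ᵥ z = t := by
    rw [hz, dotProduct_smul, smul_eq_mul, dotProduct_single, mul_one]
    field_simp
  set f : (Fin n → ℝ) →ₗ[ℝ] ℝ :=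
    { toFun := fun x => v ⬝ᵥ x
      map_add' := fun x y => dotProduct_add v x y
      map_smul' := fun c x => by simp [dotProduct_smul, smul_eq_mul] } with hf
  have hker : LinearMap.ker f ≠ ⊤ := by
    intro hk
    have hm : f (Pi.single j 1) = 0 := by
      rw [← LinearMap.mem_ker, hk]; trivial
    rw [hf] at hm
    simp only [LinearMap.coe_mk, AddHom.coe_mk, dotProduct_single, mul_one] at hm
    exact hj hm
  have key : (fun x => z + x) ⁻¹' {x : Fin n → ℝ | v ⬝ᵥ x = t}
      = (LinearMap.ker f : Set (Fin n → ℝ)) := by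
    ext x
    simp only [mem_preimage, mem_setOf_eq, SetLike.mem_coe, LinearMap.mem_ker, hf,
      LinearMap.coe_mk, AddHom.coe_mk, dotProduct_add, hzv]
    constructor <;> intro hx <;> linarith
  have := measure_preimage_add (volume : Measure (Fin n → ℝ)) z {x : Fin n → ℝ | v ⬝ᵥ x = t}
  rw [key] at this
  rw [← this]
  exact Measure.addHaar_submodule volume _ hker

lemma posdir {n : ℕ} (v x₀ : Fin n → ℝ) (δ : ℝ) (hδ : 0 < δ)
    (H : ∀ x : Fin n → ℝ, dist x x₀ < δ → v ⬝ᵥ (x - x₀) ≤ 0) : v = 0 := by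
  by_contra hv
  set c : ℝ := δ / (2 * (‖v‖ + 1)) with hc
  have hnv : (0:ℝ) < ‖v‖ + 1 := by positivity
  have hcpos : 0 < c := by positivity
  have hd : dist (x₀ + c • v) x₀ < δ := by
    rw [dist_eq_norm]
    simp only [add_sub_cancel_left, norm_smul, Real.norm_eq_abs, abs_of_pos hcpos]
    calc c * ‖v‖ < c * (‖v‖ + 1) := by nlinarith [norm_nonneg v]
      _ = δ / 2 := by rw [hc]; field_simp
      _ < δ := by linarith
  have := H _ hd
  simp only [add_sub_cancel_left, dotProduct_smul, smul_eq_mul] at this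
  have hvv : 0 < v ⬝ᵥ v :=
    lt_of_le_of_ne (Finset.sum_nonneg fun i _ => mul_self_nonneg _)
      (Ne.symm fun hh => hv (dotProduct_self_eq_zero.1 hh))
  nlinarith

end aux

/-- If `h` is polyhedral convex with `dim (epi h) = n + 1` (i.e. `epi h` has nonempty
interior in `ℝ^{n+1}`), then `epi h*` has a vertex (extreme point). -/
theorem stmt10 {n : ℕ} (h : (Fin n → ℝ) → EReal)
    (hpoly : IsPolyhedralFn h) (hbot : ∀ x, h x ≠ ⊥)
    (hdim : (interior (epiFn h)).Nonempty) :
    (Set.extremePoints ℝ (epiFn (conjFn h))).Nonempty := by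
  classical
  obtain ⟨m, B, b, c, hE⟩ := hpoly
  obtain ⟨p₁, hp₁⟩ := hdim
  obtain ⟨ε, hε, hball⟩ : ∃ ε > 0, Metric.ball p₁ ε ⊆ epiFn h := by
    obtain ⟨ε, hε, hb⟩ := Metric.isOpen_iff.1 isOpen_interior p₁ hp₁
    exact ⟨ε, hε, hb.trans interior_subset⟩
  set x₁ := p₁.1 with hx₁def
  set r₁ := p₁.2 with hr₁def
  have hmem : ∀ p : (Fin n → ℝ) × ℝ, p ∈ epiFn h ↔ ∀ i, c i ≤ (B *ᵥ p.1) i + b i * p.2 :=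
    fun p => by rw [Set.ext_iff] at hE; exact hE p
  have hp₁e : p₁ ∈ epiFn h := interior_subset hp₁
  have hup : ∀ (x : Fin n → ℝ) (r r' : ℝ), (x, r) ∈ epiFn h → r ≤ r' → (x, r') ∈ epiFn h :=
    fun x r r' hr hrr => le_trans hr (EReal.coe_le_coe_iff.2 hrr)
  -- all b i are nonnegative
  have hbnn : ∀ i, 0 ≤ b i := by
    intro j
    by_contra hj
    push_neg at hj
    set r : ℝ := max r₁ ((c j - (B *ᵥ x₁) j) / b j + 1) with hr
    have h1 : (x₁, r) ∈ epiFn h := hup x₁ r₁ r hp₁e (le_max_left _ _)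
    have h2 := (hmem _).1 h1 j
    have h3 : (c j - (B *ᵥ x₁) j) / b j < r := lt_of_lt_of_le (by linarith) (le_max_right _ _)
    rw [div_lt_iff_of_neg hj] at h3
    simp only at h2 h3
    nlinarith
  set D : Set (Fin n → ℝ) := {x | ∀ i, b i = 0 → c i ≤ (B *ᵥ x) i} with hD
  have hDepi : ∀ (x : Fin n → ℝ) (r : ℝ), (x, r) ∈ epiFn h → x ∈ D := by
    intro x r hxr i hi
    have := (hmem _).1 hxr i
    simp only [hi, zero_mul, add_zero] at this
    exact this
  have hballD : ∀ x : Fin n → ℝ, dist x x₁ < ε → (x, r₁) ∈ epiFn h := by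
    intro x hx
    apply hball
    rw [Metric.mem_ball]
    have : dist ((x, r₁) : (Fin n → ℝ) × ℝ) p₁ = max (dist x x₁) (dist r₁ r₁) := by
      rw [Prod.dist_eq]
    rw [this, dist_self]
    exact max_lt hx hε
  set I : Finset (Fin m) := Finset.univ.filter (fun i => 0 < b i) with hI
  have hbI : ∀ i ∈ I, 0 < b i := fun i hi => (Finset.mem_filter.1 hi).2
  have hIne : I.Nonempty := by
    by_contra hne
    rw [Finset.not_nonempty_iff_eq_empty] at hne
    have hb0 : ∀ i, b i = 0 := by
      intro i
      rcases eq_or_lt_of_le (hbnn i) with hh | hh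
      · exact hh.symm
      · exact absurd (show i ∈ I from Finset.mem_filter.2 ⟨Finset.mem_univ i, hh⟩) (by rw [hne]; simp)
    have : ∀ r : ℝ, h x₁ ≤ (r : EReal) := by
      intro r
      have : (x₁, r) ∈ epiFn h := by
        rw [hmem]
        intro i
        have := (hmem _).1 hp₁e i
        simp only [hb0 i, zero_mul, add_zero] at this ⊢
        exact this
      exact this
    exact hbot x₁ (ereal_eq_bot _ this)
  set ℓ : Fin m → (Fin n → ℝ) → ℝ := fun i x => (c i - (B *ᵥ x) i) / b i with hℓ
  set M : (Fin n → ℝ) → ℝ := fun x => I.sup' hIne (fun i => ℓ i x) with hM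
  -- characterization of h on D and off D
  have hval : ∀ x ∈ D, ∀ r : ℝ, ((x, r) ∈ epiFn h ↔ M x ≤ r) := by
    intro x hx r
    rw [hmem]
    constructor
    · intro hc
      apply Finset.sup'_le
      intro i hi
      have hbi := hbI i hi
      rw [hℓ, div_le_iff₀ hbi]
      have := hc i
      nlinarith
    · intro hMr i
      rcases eq_or_lt_of_le (hbnn i) with hh | hh
      · have := hx i hh.symm
        simp only [← hh, zero_mul, add_zero]
        exact this
      · have hiI : i ∈ I := Finset.mem_filter.2 ⟨Finset.mem_univ i, hh⟩
        have h1 : ℓ i x ≤ r := le_trans (Finset.le_sup' (fun i => ℓ i x) hiI) hMr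
        rw [hℓ, div_le_iff₀ hh] at h1
        nlinarith
  have hhD : ∀ x ∈ D, h x = ((M x : ℝ) : EReal) := by
    intro x hx
    have h1 : h x ≤ (M x : EReal) := (hval x hx (M x)).2 le_rfl
    obtain ⟨s, hs, hsM⟩ := ereal_exists_eq (h x) (hbot x) h1
    have h2 : (x, s) ∈ epiFn h := by rw [show ((x,s) ∈ epiFn h) ↔ h x ≤ (s:EReal) from Iff.rfl, hs]
    have h3 : M x ≤ s := (hval x hx s).1 h2
    rw [hs]
    exact_mod_cast le_antisymm hsM h3
  have hhT : ∀ x, x ∉ D → h x = ⊤ := by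
    intro x hx
    by_contra hne
    obtain ⟨r, hr⟩ := ereal_exists_le (h x) hne
    exact hx (hDepi x r hr)
  -- gradients of the affine pieces
  set a : Fin m → (Fin n → ℝ) := fun i k => -(B i k) / b i with ha
  have haff : ∀ i ∈ I, ∀ x y : Fin n → ℝ, ℓ i x - ℓ i y = a i ⬝ᵥ (x - y) := by
    intro i hi x y
    have hbi := hbI i hi
    have h1 : a i ⬝ᵥ (x - y) = (∑ k, B i k * (y k - x k)) / b i := by
      rw [Finset.sum_div]
      simp only [dotProduct, ha, Pi.sub_apply]
      exact Finset.sum_congr rfl fun k _ => by field_simp; ring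
    have h2 : (B *ᵥ y) i - (B *ᵥ x) i = ∑ k, B i k * (y k - x k) := by
      simp only [Matrix.mulVec, dotProduct, mul_sub, Finset.sum_sub_distrib]
    rw [h1, ← h2, hℓ]
    field_simp
    ring
  -- the "bad" set of non-generic points is null
  set bad : Set (Fin n → ℝ) :=
    ⋃ i ∈ I, ⋃ j ∈ I, ⋃ (_ : a i ≠ a j), {x | ℓ i x = ℓ j x} with hbad
  have hbadnull : MeasureTheory.volume bad = 0 := by
    refine MeasureTheory.measure_iUnion_null fun i => MeasureTheory.measure_iUnion_null
      fun hi => MeasureTheory.measure_iUnion_null fun j => MeasureTheory.measure_iUnion_null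
      fun hj => MeasureTheory.measure_iUnion_null fun hij => ?_
    have hset : {x : Fin n → ℝ | ℓ i x = ℓ j x}
        = {x : Fin n → ℝ | (a i - a j) ⬝ᵥ x = ℓ j 0 - ℓ i 0} := by
      ext x
      have e1 := haff i hi x 0
      have e2 := haff j hj x 0
      simp only [sub_zero] at e1 e2
      simp only [mem_setOf_eq, sub_dotProduct]
      constructor <;> intro hx <;> linarith
    rw [hset]
    exact hyper_null _ (sub_ne_zero.2 hij) _
  -- pick a generic point x₀ in the ball
  obtain ⟨x₀, hx₀ball, hx₀bad⟩ : ∃ x₀, x₀ ∈ Metric.ball x₁ ε ∧ x₀ ∉ bad := by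
    by_contra hc
    push_neg at hc
    have hsub : Metric.ball x₁ ε ⊆ bad := fun x hx => hc x hx
    have hmono : MeasureTheory.volume (Metric.ball x₁ ε) ≤ MeasureTheory.volume bad :=
      MeasureTheory.measure_mono hsub
    rw [hbadnull] at hmono
    exact absurd (le_antisymm hmono zero_le)
      (Metric.measure_ball_pos MeasureTheory.volume x₁ hε).ne'
  have hx₀b : dist x₀ x₁ < ε := Metric.mem_ball.1 hx₀ball
  have hx₀D : x₀ ∈ D := hDepi x₀ r₁ (hballD x₀ hx₀b)
  obtain ⟨i₀, hi₀I, hi₀⟩ := Finset.exists_mem_eq_sup' hIne (fun i => ℓ i x₀)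
  -- local structure: h is affine near x₀
  have hloc : ∀ᶠ x in nhds x₀, x ∈ D ∧ M x = ℓ i₀ x := by
    have hDnear : ∀ᶠ x in nhds x₀, x ∈ D := by
      filter_upwards [Metric.isOpen_ball.eventually_mem hx₀ball] with x hx
      exact hDepi x r₁ (hballD x (Metric.mem_ball.1 hx))
    have hjnear : ∀ j ∈ I, ∀ᶠ x in nhds x₀, ℓ j x ≤ ℓ i₀ x := by
      intro j hj
      by_cases haj : a j = a i₀
      · apply Filter.Eventually.of_forall
        intro x
        have e1 := haff j hj x x₀
        have e2 := haff i₀ hi₀I x x₀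
        rw [haj] at e1
        have e3 : ℓ j x₀ ≤ ℓ i₀ x₀ := hi₀ ▸ Finset.le_sup' (fun i => ℓ i x₀) hj
        linarith
      · have hne : ℓ j x₀ ≠ ℓ i₀ x₀ := by
          intro he
          exact hx₀bad (Set.mem_biUnion hj (Set.mem_biUnion hi₀I
            (Set.mem_iUnion.2 ⟨haj, he⟩)))
        have hle : ℓ j x₀ ≤ ℓ i₀ x₀ := hi₀ ▸ Finset.le_sup' (fun i => ℓ i x₀) hj
        have hlt : ℓ j x₀ < ℓ i₀ x₀ := lt_of_le_of_ne hle hne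
        have hcont : ∀ i : Fin m, Continuous (ℓ i) := by
          intro i
          apply Continuous.div_const
          apply Continuous.sub continuous_const
          simp only [Matrix.mulVec, dotProduct]
          exact continuous_finset_sum _ fun k _ => continuous_const.mul (continuous_apply k)
        have hopen : IsOpen {x : Fin n → ℝ | ℓ j x < ℓ i₀ x} := isOpen_lt (hcont j) (hcont i₀)
        filter_upwards [hopen.eventually_mem hlt] with x hx
        exact le_of_lt hx
    have hall : ∀ᶠ x in nhds x₀, ∀ j ∈ I, ℓ j x ≤ ℓ i₀ x :=
      (Filter.eventually_all_finset I).2 hjnear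
    filter_upwards [hDnear, hall] with x hx1 hx2
    exact ⟨hx1, le_antisymm (Finset.sup'_le _ _ hx2) (Finset.le_sup' (fun i => ℓ i x) hi₀I)⟩
  obtain ⟨δ, hδ, hP⟩ := Metric.eventually_nhds_iff.1 hloc
  have hhx : ∀ x : Fin n → ℝ, dist x x₀ < δ → h x = ((ℓ i₀ x : ℝ) : EReal) := by
    intro x hx
    rw [hhD x (hP hx).1]
    exact_mod_cast (hP hx).2
  have hh₀ : h x₀ = ((ℓ i₀ x₀ : ℝ) : EReal) := hhx x₀ (by simpa using hδ)
  set h₀ : ℝ := ℓ i₀ x₀ with hh₀def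
  set sb : ℝ := a i₀ ⬝ᵥ x₀ - h₀ with hsb
  have hterm : ∀ (y : Fin n → ℝ) (s : ℝ), (y, s) ∈ epiFn (conjFn h) →
      ∀ x : Fin n → ℝ, ((y ⬝ᵥ x : ℝ) : EReal) - h x ≤ (s : EReal) := by
    intro y s hys x
    exact le_trans (le_iSup (fun x => ((y ⬝ᵥ x : ℝ) : EReal) - h x) x) hys
  -- the candidate vertex is in the epigraph of the conjugate
  have hmemp : ((a i₀, sb) : (Fin n → ℝ) × ℝ) ∈ epiFn (conjFn h) := by
    show conjFn h (a i₀) ≤ (sb : EReal)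
    apply iSup_le
    intro x
    by_cases hxD : x ∈ D
    · rw [hhD x hxD, ← EReal.coe_sub, EReal.coe_le_coe_iff]
      have h1 : ℓ i₀ x ≤ M x := Finset.le_sup' (fun i => ℓ i x) hi₀I
      have h2 := haff i₀ hi₀I x x₀
      rw [dotProduct_sub] at h2
      linarith
    · rw [hhT x hxD]
      simp
  -- lower bound for the linear functional on the epigraph of the conjugate
  have hlb : ∀ (y : Fin n → ℝ) (s : ℝ), (y, s) ∈ epiFn (conjFn h) → -h₀ ≤ s - y ⬝ᵥ x₀ := by
    intro y s hys
    have := hterm y s hys x₀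
    rw [hh₀, ← EReal.coe_sub, EReal.coe_le_coe_iff] at this
    linarith
  -- uniqueness of the minimizer
  have huniq : ∀ (y : Fin n → ℝ) (s : ℝ), (y, s) ∈ epiFn (conjFn h) →
      s - y ⬝ᵥ x₀ = -h₀ → y = a i₀ ∧ s = sb := by
    intro y s hys heq
    have hy : y = a i₀ := by
      have hz : y - a i₀ = 0 := by
        apply posdir (y - a i₀) x₀ δ hδ
        intro x hx
        have h1 := hterm y s hys x
        rw [hhx x hx, ← EReal.coe_sub, EReal.coe_le_coe_iff] at h1
        have h2 := haff i₀ hi₀I x x₀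
        rw [dotProduct_sub] at h2
        rw [sub_dotProduct, dotProduct_sub, dotProduct_sub]
        linarith
      have := sub_eq_zero.1 hz
      exact this
    refine ⟨hy, ?_⟩
    rw [hy] at heq
    rw [hsb]
    linarith
  -- conclusion: (a i₀, sb) is an extreme point
  refine ⟨(a i₀, sb), mem_extremePoints.2 ⟨hmemp, ?_⟩⟩
  rintro p hp q hq ⟨α, β, hα, hβ, hαβ, hsum⟩
  have h1 : α * p.2 + β * q.2 = sb := by
    have := congrArg Prod.snd hsum
    simpa using this
  have h2 : α • p.1 + β • q.1 = a i₀ := by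
    have := congrArg Prod.fst hsum
    simpa using this
  have hfp : -h₀ ≤ p.2 - p.1 ⬝ᵥ x₀ := hlb p.1 p.2 hp
  have hfq : -h₀ ≤ q.2 - q.1 ⬝ᵥ x₀ := hlb q.1 q.2 hq
  have hcomb : α * (p.2 - p.1 ⬝ᵥ x₀) + β * (q.2 - q.1 ⬝ᵥ x₀) = -h₀ := by
    have e1 : (α • p.1 + β • q.1) ⬝ᵥ x₀ = α * (p.1 ⬝ᵥ x₀) + β * (q.1 ⬝ᵥ x₀) := by
      rw [add_dotProduct, smul_dotProduct, smul_dotProduct, smul_eq_mul, smul_eq_mul]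
    have e2 : (a i₀ : Fin n → ℝ) ⬝ᵥ x₀ = α * (p.1 ⬝ᵥ x₀) + β * (q.1 ⬝ᵥ x₀) := by
      rw [← h2, e1]
    have e3 : sb - a i₀ ⬝ᵥ x₀ = -h₀ := by rw [hsb]; ring
    nlinarith [e2, h1]
  have hfpe : p.2 - p.1 ⬝ᵥ x₀ = -h₀ ∧ q.2 - q.1 ⬝ᵥ x₀ = -h₀ := by
    have hhh : α * h₀ + β * h₀ = h₀ := by rw [← add_mul, hαβ, one_mul]
    have e0 : α * (p.2 - p.1 ⬝ᵥ x₀ + h₀) + β * (q.2 - q.1 ⬝ᵥ x₀ + h₀) = 0 := by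
      linear_combination hcomb + hhh
    have t1 : 0 ≤ α * (p.2 - p.1 ⬝ᵥ x₀ + h₀) := mul_nonneg hα.le (by linarith)
    have t2 : 0 ≤ β * (q.2 - q.1 ⬝ᵥ x₀ + h₀) := mul_nonneg hβ.le (by linarith)
    have z1 : α * (p.2 - p.1 ⬝ᵥ x₀ + h₀) = 0 := by linarith
    have z2 : β * (q.2 - q.1 ⬝ᵥ x₀ + h₀) = 0 := by linarith
    constructor
    · rcases mul_eq_zero.1 z1 with hz | hz
      · exact absurd hz hα.ne'
      · linarith
    · rcases mul_eq_zero.1 z2 with hz | hz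
      · exact absurd hz hβ.ne'
      · linarith
  obtain ⟨hp1, hp2⟩ := huniq p.1 p.2 hp hfpe.1
  obtain ⟨hq1, hq2⟩ := huniq q.1 q.2 hq hfpe.2
  exact ⟨Prod.ext hp1 hp2, Prod.ext hq1 hq2⟩
end

section
/- Let Y = {x ∈ ℝⁿ : ∃u ∈ ℝᵏ, Bx + Cu ≥ c} be the projection of a polyhedron, and let 𝒫 = {z ∈ ℝ^{n+1} : ∃u ∈ ℝᵏ, ∃x ∈ ℝⁿ, z ≥ (x, −⟨e, x⟩) and Bx + Cu ≥ c} be the upper image of the associated multiple objective linear program with objectives (x, −⟨e,x⟩). Let Q = {(x, −⟨e,x⟩) : x ∈ Y}. Then 𝒫 = Q + ℝ₊^{n+1} and Q = 𝒫 ∩ {z ∈ ℝ^{n+1} : ⟨e', z⟩ = 0}, where e' is the all-ones vector in ℝ^{n+1}; consequently, Y = {(z₁,…,z_n) : z ∈ 𝒫, z₁ + ⋯ + z_{n+1} = 0}. -/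
/-!
The objective map `x ↦ (x, -∑ x)` takes values on the hyperplane `∑ z = 0`, and a point
above an image point `(x, -∑ x)` lies on that hyperplane only if it equals it: raising
coordinates can only increase the coordinate sum. So the upper image meets the hyperplane
exactly in the image `Q`, and `Y` is read off `Q` by the first projection.
-/

open Matrix Set

section NegSumGraph

variable {ι α : Type*} [Fintype ι] [AddCommGroup α]

def negSumGraph (x : ι → α) : (ι → α) × α := (x, -∑ i, x i)

lemma sum_add_eq_zero_of_mem_range_negSumGraph {z : (ι → α) × α}
    (hz : z ∈ range negSumGraph) : ∑ i, z.1 i + z.2 = 0 := by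
  obtain ⟨x, rfl⟩ := hz
  exact add_neg_cancel _

variable [PartialOrder α] [IsOrderedAddMonoid α]

lemma eq_negSumGraph_of_negSumGraph_le {x : ι → α} {z : (ι → α) × α}
    (hxz : negSumGraph x ≤ z) (hz : ∑ i, z.1 i + z.2 = 0) : z = negSumGraph x := by
  obtain ⟨hx, hsum⟩ := Prod.le_def.1 hxz
  have hle : ∑ i, x i ≤ ∑ i, z.1 i := Finset.sum_le_sum fun i _ ↦ hx i
  have hge : ∑ i, z.1 i ≤ ∑ i, x i := by
    rw [eq_neg_of_add_eq_zero_right hz] at hsum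
    exact neg_le_neg_iff.1 hsum
  have hfst : z.1 = x := funext fun i ↦
    ((Finset.sum_eq_sum_iff_of_le fun i _ ↦ hx i).1 (le_antisymm hle hge) i
      (Finset.mem_univ i)).symm
  exact Prod.ext hfst (by rw [eq_neg_of_add_eq_zero_right hz, hfst]; rfl)

lemma upperClosure_image_negSumGraph_inter_hyperplane (Y : Set (ι → α)) :
    {z | ∃ q ∈ negSumGraph '' Y, q ≤ z} ∩ {z | ∑ i, z.1 i + z.2 = 0} = negSumGraph '' Y := by
  refine Subset.antisymm ?_ fun z hz ↦ ⟨⟨z, hz, le_rfl⟩, ?_⟩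
  · rintro z ⟨⟨_, ⟨x, hx, rfl⟩, hxz⟩, hz⟩
    exact ⟨x, hx, (eq_negSumGraph_of_negSumGraph_le hxz hz).symm⟩
  · exact sum_add_eq_zero_of_mem_range_negSumGraph (image_subset_range _ _ hz)

end NegSumGraph

lemma setOf_exists_le_eq_add_nonneg {G : Type*} [AddCommGroup G] [PartialOrder G]
    [IsOrderedAddMonoid G] (S : Set G) :
    {z | ∃ q ∈ S, q ≤ z} = {z | ∃ q ∈ S, ∃ w, 0 ≤ w ∧ z = q + w} := by
  ext z
  refine ⟨fun ⟨q, hq, hqz⟩ ↦ ⟨q, hq, z - q, sub_nonneg.2 hqz, (add_sub_cancel q z).symm⟩, ?_⟩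
  rintro ⟨q, hq, w, hw, rfl⟩
  exact ⟨q, hq, le_add_of_nonneg_right hw⟩

/-- For the projection `Y` of a polyhedron and the upper image `𝒫` of the associated
MOLP with objective map `x ↦ (x, −⟨e,x⟩)` (points of `ℝ^{n+1}` written as pairs
`(z₁,…,zₙ) × z_{n+1}`): `𝒫 = Q + ℝ₊^{n+1}`, `Q = 𝒫 ∩ {z : ⟨e',z⟩ = 0}`, and `Y` is
recovered from `𝒫` by intersecting with this hyperplane and projecting. -/
theorem stmt18 {n m k : ℕ} (B : Matrix (Fin m) (Fin n) ℝ)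
    (C : Matrix (Fin m) (Fin k) ℝ) (c : Fin m → ℝ)
    (Y : Set (Fin n → ℝ)) (hY : Y = {x | ∃ u : Fin k → ℝ, c ≤ B *ᵥ x + C *ᵥ u})
    (P : Set ((Fin n → ℝ) × ℝ))
    (hP : P = {z | ∃ (u : Fin k → ℝ) (x : Fin n → ℝ),
      c ≤ B *ᵥ x + C *ᵥ u ∧ x ≤ z.1 ∧ -(∑ i, x i) ≤ z.2})
    (Q : Set ((Fin n → ℝ) × ℝ))
    (hQ : Q = {z | ∃ x ∈ Y, z = (x, -(∑ i, x i))}) :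
    P = {z | ∃ q ∈ Q, ∃ w : (Fin n → ℝ) × ℝ, 0 ≤ w.1 ∧ 0 ≤ w.2 ∧ z = q + w} ∧
    Q = P ∩ {z | (∑ i, z.1 i) + z.2 = 0} ∧
    Y = Prod.fst '' (P ∩ {z | (∑ i, z.1 i) + z.2 = 0}) := by
  have hQ' : Q = negSumGraph '' Y := by
    subst hQ
    ext z
    simp only [mem_ofPred_eq, mem_image, negSumGraph, eq_comm]
  have hP' : P = {z | ∃ q ∈ Q, q ≤ z} := by
    subst hP hY
    ext z
    simp only [hQ', mem_ofPred_eq, mem_image, exists_exists_and_eq_and, negSumGraph, Prod.le_def]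
    exact ⟨fun ⟨u, x, hux, hx⟩ ↦ ⟨x, ⟨u, hux⟩, hx⟩, fun ⟨x, ⟨u, hux⟩, hx⟩ ↦ ⟨u, x, hux, hx⟩⟩
  have hQP : Q = P ∩ {z | ∑ i, z.1 i + z.2 = 0} := by
    rw [hP', hQ', upperClosure_image_negSumGraph_inter_hyperplane]
  refine ⟨?_, hQP, ?_⟩
  · rw [hP', setOf_exists_le_eq_add_nonneg]
    simp only [Prod.le_def, Prod.fst_zero, Prod.snd_zero, and_assoc]
  · rw [← hQP, hQ', image_image]
    exact (image_id' Y).symm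
end
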